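/- For every integer n ≥ 1 and every predicate D : {0,1,...,n} → {−1,1} with M = deg₂(D), the 2^n × 2^n sign matrix F indexed by x, y ∈ {0,1}^n with entries F(x,y) = D(|x ⊕ y|) has sign-rank rk±(F) ≤ 4 · Σ_{k=0}^{M} C(n,k); in particular rk±(F) ≤ 4 n^M for all sufficiently large n. (This is the upper bound of the main theorem: the unbounded-error communication complexity of f^⊕_D is at most O(deg₂(D) · log n).) -/

import Mathlib

/-!
For `t` of a fixed parity `r`, the ±1-valued `D(t)` changes sign only at the `deg₂(D) = M` places
`i` with `D(i) ≠ D(i + 2)`, so a polynomial `p_r` of degree `≤ M` in `t` has the sign of `D` at all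
`t ≡ r (mod 2)`. A polynomial of degree `≤ M` in the weight `|z|` is a combination of characters
`χ_S` with `|S| ≤ M`, and `χ_S(x ⊕ y) = χ_S(x) χ_S(y)`, so its XOR matrix has rank at most
`∑_{k ≤ M} C(n,k)`. The function `(p₀ + p₁)/2 + (-1)^|z| (p₀ - p₁)/2` equals `p_{|z| mod 2}(|z|)`,
and multiplying by `(-1)^|x ⊕ y| = χ_[n](x) χ_[n](y)` is a diagonal conjugation of the matrix, so it
sign-represents `D(|x ⊕ y|)` with rank at most `2 ∑_{k ≤ M} C(n,k)`.
-/

/-- Hamming weight of a Boolean vector. -/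
def hamW {n : ℕ} (x : Fin n → Bool) : ℕ := (Finset.univ.filter (fun i => x i)).card

/-- Bitwise XOR of Boolean vectors. -/
def bxor {n : ℕ} (x y : Fin n → Bool) : Fin n → Bool := fun i => xor (x i) (y i)

/-- Bitwise AND of Boolean vectors. -/
def band {n : ℕ} (x y : Fin n → Bool) : Fin n → Bool := fun i => x i && y i

/-- Sign-rank of a real sign matrix `F`: the least rank of a real matrix `A`
of the same dimensions all of whose entries are nonzero and have the same sign
as the corresponding entry of `F`. -/
noncomputable def signRank {X Y : Type} [Fintype X] [Fintype Y]
    (F : Matrix X Y ℝ) : ℕ :=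
  sInf {r : ℕ | ∃ A : Matrix X Y ℝ, (∀ x y, 0 < A x y * F x y) ∧ A.rank = r}

open Finset

lemma Matrix.rank_add_le {m n K : Type*} [Fintype n] [Field K] (A B : Matrix m n K) :
    (A + B).rank ≤ A.rank + B.rank := by
  rw [Matrix.rank, Matrix.rank, Matrix.rank, Matrix.mulVecLin_add]
  exact (Submodule.finrank_mono (LinearMap.range_add_le _ _)).trans
    (Submodule.finrank_add_le_finrank_add_finrank _ _)

lemma signRank_le_rank {X Y : Type} [Fintype X] [Fintype Y] {F A : Matrix X Y ℝ}
    (h : ∀ x y, 0 < A x y * F x y) : signRank F ≤ A.rank :=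
  Nat.sInf_le ⟨A, h, rfl⟩

lemma hamW_le {n : ℕ} (z : Fin n → Bool) : hamW z ≤ n :=
  (card_filter_le _ _).trans (card_univ.trans (Fintype.card_fin n)).le

namespace BoolCube

variable {n : ℕ}

def chi (S : Finset (Fin n)) (z : Fin n → Bool) : ℝ := ∏ i ∈ S, if z i then -1 else 1

lemma chi_bxor (S : Finset (Fin n)) (x y : Fin n → Bool) :
    chi S (bxor x y) = chi S x * chi S y := by
  rw [chi, chi, chi, ← prod_mul_distrib]
  refine prod_congr rfl fun i _ => ?_
  cases hx : x i <;> cases hy : y i <;> simp [bxor, hx, hy]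

lemma chi_univ (z : Fin n → Bool) : chi univ z = (-1) ^ hamW z := by
  rw [chi, prod_ite]
  simp [hamW]

lemma chi_symmDiff_singleton (S : Finset (Fin n)) (i : Fin n) (z : Fin n → Bool) :
    chi (symmDiff S {i}) z = chi {i} z * chi S z := by
  by_cases hi : i ∈ S
  · have : symmDiff S {i} = S.erase i := by
      ext j; by_cases j = i <;> simp_all [mem_symmDiff]
    rw [this, chi, chi, chi, ← mul_prod_erase S _ hi, prod_singleton, ← mul_assoc]
    cases z i <;> simp
  · have : symmDiff S {i} = insert i S := by
      ext j; by_cases j = i <;> simp_all [mem_symmDiff]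
    rw [this, chi, chi, chi, prod_insert hi, prod_singleton]

lemma hamW_eq_sum_chi (z : Fin n → Bool) : (hamW z : ℝ) = ∑ i, (1 - chi {i} z) / 2 := by
  rw [hamW, card_filter, Nat.cast_sum]
  refine sum_congr rfl fun i _ => ?_
  cases h : z i <;> simp [chi, h]

def degreeLE (n d : ℕ) : Submodule ℝ ((Fin n → Bool) → ℝ) :=
  Submodule.span ℝ (Set.range fun S : {S : Finset (Fin n) // S.card ≤ d} => chi S.1)

lemma chi_mem_degreeLE {d : ℕ} {S : Finset (Fin n)} (hS : S.card ≤ d) : chi S ∈ degreeLE n d :=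
  Submodule.subset_span ⟨⟨S, hS⟩, rfl⟩

lemma degreeLE_mono {d d' : ℕ} (h : d ≤ d') : degreeLE n d ≤ degreeLE n d' :=
  Submodule.span_le.mpr <| Set.range_subset_iff.mpr fun S => chi_mem_degreeLE (S.2.trans h)

lemma hamW_mul_mem_degreeLE {d : ℕ} {f : (Fin n → Bool) → ℝ} (hf : f ∈ degreeLE n d) :
    (fun z => (hamW z : ℝ)) * f ∈ degreeLE n (d + 1) := by
  suffices degreeLE n d ≤
      (degreeLE n (d + 1)).comap (LinearMap.mulLeft ℝ fun z => (hamW z : ℝ)) from this hf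
  refine Submodule.span_le.mpr <| Set.range_subset_iff.mpr fun ⟨S, hS⟩ => ?_
  have hmul : (fun z => (hamW z : ℝ)) * chi S =
      ∑ i, (1 / 2 : ℝ) • (chi S - chi (symmDiff S {i})) := by
    ext z
    simp only [Pi.mul_apply, hamW_eq_sum_chi, sum_mul, Finset.sum_apply, Pi.smul_apply,
      Pi.sub_apply, chi_symmDiff_singleton, smul_eq_mul]
    exact sum_congr rfl fun i _ => by ring
  have hcard : ∀ i, (symmDiff S {i}).card ≤ d + 1 := fun i =>
    (card_le_card symmDiff_subset_union).trans <| (card_union_le _ _).trans (by simpa using hS)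
  show (fun z => (hamW z : ℝ)) * chi S ∈ degreeLE n (d + 1)
  rw [hmul]
  exact Submodule.sum_mem _ fun i _ => Submodule.smul_mem _ _ <| Submodule.sub_mem _
    (degreeLE_mono d.le_succ (chi_mem_degreeLE hS)) (chi_mem_degreeLE (hcard i))

lemma prod_sub_hamW_mem_degreeLE {ι : Type*} (F : Finset ι) (a : ι → ℝ) :
    (fun z => ∏ i ∈ F, (a i - hamW z)) ∈ degreeLE n F.card := by
  classical
  induction F using Finset.induction_on with
  | empty =>
    rw [card_empty]
    have h : chi (∅ : Finset (Fin n)) = fun _ => 1 := by ext; simp [chi]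
    simpa [h] using chi_mem_degreeLE (n := n) (S := ∅) le_rfl
  | insert j F hj ih =>
    rw [card_insert_of_notMem hj]
    convert Submodule.sub_mem _ (Submodule.smul_mem _ (a j) (degreeLE_mono F.card.le_succ ih))
      (hamW_mul_mem_degreeLE ih) using 1
    ext z
    simp [prod_insert hj, sub_mul]

lemma card_subtype_card_le (d : ℕ) :
    Fintype.card {S : Finset (Fin n) // S.card ≤ d} = ∑ k ∈ range (d + 1), n.choose k := by
  rw [Fintype.card_subtype, card_eq_sum_card_fiberwise (f := card) (t := range (d + 1))
    (fun S hS => by simpa [Nat.lt_succ_iff] using hS)]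
  refine sum_congr rfl fun k hk => ?_
  have hk := mem_range.mp hk
  calc _ = #(powersetCard k (univ : Finset (Fin n))) := congrArg card <| by
        ext S; simp only [mem_filter, mem_univ, true_and, mem_powersetCard_univ]; omega
    _ = n.choose k := by simp

def xorMatrix (g : (Fin n → Bool) → ℝ) : Matrix (Fin n → Bool) (Fin n → Bool) ℝ :=
  Matrix.of fun x y => g (bxor x y)

lemma rank_xorMatrix_le {d : ℕ} {g : (Fin n → Bool) → ℝ} (hg : g ∈ degreeLE n d) :
    (xorMatrix g).rank ≤ ∑ k ∈ range (d + 1), n.choose k := by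
  obtain ⟨c, rfl⟩ := (Submodule.mem_span_range_iff_exists_fun ℝ).mp hg
  let L : Matrix (Fin n → Bool) {S : Finset (Fin n) // S.card ≤ d} ℝ :=
    .of fun x S => c S * chi S.1 x
  let R : Matrix {S : Finset (Fin n) // S.card ≤ d} (Fin n → Bool) ℝ := .of fun S y => chi S.1 y
  have : xorMatrix (∑ S, c S • chi S.1) = L * R := by
    ext x y
    simp only [xorMatrix, L, R, Matrix.of_apply, Matrix.mul_apply, Finset.sum_apply, Pi.smul_apply,
      smul_eq_mul, chi_bxor, mul_assoc]
  rw [this, ← card_subtype_card_le]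
  exact (Matrix.rank_mul_le_left _ _).trans (Matrix.rank_le_card_width _)

lemma signRank_xor_le_of_parity {d : ℕ} {F : (Fin n → Bool) → ℝ} {p : ℕ → (Fin n → Bool) → ℝ}
    (hp : ∀ r, p r ∈ degreeLE n d) (hF : ∀ z, 0 < p (hamW z % 2) z * F z) :
    signRank (fun x y => F (bxor x y)) ≤ 2 * ∑ k ∈ range (d + 1), n.choose k := by
  set u := (1 / 2 : ℝ) • (p 0 + p 1)
  set v := (1 / 2 : ℝ) • (p 0 - p 1)
  set χ := Matrix.diagonal (chi (univ : Finset (Fin n))) with hχ_def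
  have hA : ∀ x y,
      (xorMatrix u + χ * xorMatrix v * χ) x y = p (hamW (bxor x y) % 2) (bxor x y) := by
    intro x y
    have hχ : chi univ x * chi univ y = (-1) ^ hamW (bxor x y) := by rw [← chi_bxor, chi_univ]
    simp only [hχ_def, Matrix.add_apply, Matrix.mul_diagonal, Matrix.diagonal_mul, xorMatrix,
      Matrix.of_apply, u, v, Pi.smul_apply, Pi.add_apply, Pi.sub_apply, smul_eq_mul]
    rcases Nat.mod_two_eq_zero_or_one (hamW (bxor x y)) with h | h <;> rw [h]
    · linear_combination (1 / 2 * (p 0 (bxor x y) - p 1 (bxor x y))) *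
        (hχ.trans (Nat.even_iff.mpr h).neg_one_pow)
    · linear_combination (1 / 2 * (p 0 (bxor x y) - p 1 (bxor x y))) *
        (hχ.trans (Nat.odd_iff.mpr h).neg_one_pow)
  calc signRank (fun x y => F (bxor x y))
      ≤ (xorMatrix u + χ * xorMatrix v * χ).rank := signRank_le_rank fun x y => by
        rw [hA]; exact hF _
    _ ≤ (xorMatrix u).rank + (χ * xorMatrix v * χ).rank := Matrix.rank_add_le _ _
    _ ≤ (xorMatrix u).rank + (xorMatrix v).rank := by
        gcongr
        exact (Matrix.rank_mul_le_left _ _).trans (Matrix.rank_mul_le_right _ _)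
    _ ≤ 2 * ∑ k ∈ range (d + 1), n.choose k := by
        rw [two_mul]
        exact add_le_add
          (rank_xorMatrix_le (Submodule.smul_mem _ _ (Submodule.add_mem _ (hp 0) (hp 1))))
          (rank_xorMatrix_le (Submodule.smul_mem _ _ (Submodule.sub_mem _ (hp 0) (hp 1))))

end BoolCube

lemma neg_one_pow_mul_prod_sub_pos {ι : Type*} (F : Finset ι) (a : ι → ℝ) {t : ℝ}
    (h : ∀ i ∈ F, a i ≠ t) : 0 < (-1) ^ #{i ∈ F | a i < t} * ∏ i ∈ F, (a i - t) := by
  classical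
  induction F using Finset.induction_on with
  | empty => simp
  | insert j F hj ih =>
    have hF := ih fun i hi => h i (mem_insert_of_mem hi)
    rw [prod_insert hj, filter_insert]
    rcases (h j (mem_insert_self j F)).lt_or_gt with hlt | hgt
    · rw [if_pos hlt, card_insert_of_notMem fun hm => hj (mem_filter.mp hm).1, pow_succ]
      nlinarith
    · rw [if_neg hgt.not_gt]
      nlinarith

/-- `#(signChanges₂ n D)` is `deg₂(D)`. -/
def signChanges₂ (n : ℕ) (D : ℕ → ℤ) : Finset ℕ := (range (n - 1)).filter fun i => D i ≠ D (i + 2)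

lemma eq_neg_one_pow_card_signChanges₂_mul {n : ℕ} {D : ℕ → ℤ}
    (hD : ∀ i ≤ n, D i = 1 ∨ D i = -1) {t : ℕ} (ht : t ≤ n) :
    D t = (-1) ^ #{i ∈ (signChanges₂ n D).filter (· % 2 = t % 2) | i + 1 < t} * D (t % 2) := by
  induction t using Nat.twoStepInduction with
  | zero => simp
  | one => simp
  | more t ih _ =>
    set C := signChanges₂ n D
    have hmem : t ∈ C ↔ D t ≠ D (t + 2) := by simp [C, signChanges₂]; omega
    have hstep : D (t + 2) = (if t ∈ C then -1 else 1) * D t := by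
      rcases hD t (by omega) with h | h <;> rcases hD (t + 2) ht with h' | h' <;> simp [hmem, h, h']
    have hset : {i ∈ C.filter (· % 2 = (t + 2) % 2) | i + 1 < t + 2} =
        {i ∈ C.filter (· % 2 = t % 2) | i + 1 < t} ∪ C.filter (· = t) := by
      ext i; simp only [mem_filter, mem_union]; grind
    have hdisj : Disjoint {i ∈ C.filter (· % 2 = t % 2) | i + 1 < t} (C.filter (· = t)) :=
      disjoint_left.mpr fun i hi hit => by simp only [mem_filter] at hi hit; omega
    rw [hstep, ih (by omega), hset, card_union_of_disjoint hdisj, filter_eq', Nat.add_mod_right]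
    split_ifs <;> simp [pow_succ]

/-- The roots `t = i + 1` lie between the points `i` and `i + 2` of parity `r` at which `D`
changes sign. -/
def parityPoly (n : ℕ) (D : ℕ → ℤ) (r : ℕ) (s : ℝ) : ℝ :=
  D r * ∏ i ∈ (signChanges₂ n D).filter (· % 2 = r), ((i : ℝ) + 1 - s)

lemma parityPoly_mul_pos {n : ℕ} {D : ℕ → ℤ} (hD : ∀ i ≤ n, D i = 1 ∨ D i = -1) {t : ℕ}
    (ht : t ≤ n) : 0 < parityPoly n D (t % 2) t * D t := by
  set F := (signChanges₂ n D).filter (· % 2 = t % 2)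
  have hroots : ∀ i ∈ F, (i : ℝ) + 1 ≠ t := fun i hi => by
    have := (mem_filter.mp hi).2
    exact_mod_cast (by omega : i + 1 ≠ t)
  have hprod := neg_one_pow_mul_prod_sub_pos F (fun i => (i : ℝ) + 1) hroots
  have hcount : {i ∈ F | ((i : ℕ) : ℝ) + 1 < t} = {i ∈ F | i + 1 < t} :=
    filter_congr fun i _ => by norm_cast
  rw [hcount] at hprod
  have hsq : (D (t % 2) : ℝ) ^ 2 = 1 := by
    rcases hD (t % 2) ((Nat.mod_le t 2).trans ht) with h | h <;> simp [h]
  calc 0 < (-1) ^ #{i ∈ F | i + 1 < t} * ∏ i ∈ F, ((i : ℝ) + 1 - t) := hprod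
    _ = parityPoly n D (t % 2) t * D t := by
      rw [parityPoly, eq_neg_one_pow_card_signChanges₂_mul hD ht]
      push_cast
      linear_combination -(-1) ^ #{i ∈ F | i + 1 < t} * (∏ i ∈ F, ((i : ℝ) + 1 - t)) * hsq

lemma parityPoly_comp_hamW_mem_degreeLE (n : ℕ) (D : ℕ → ℤ) (r : ℕ) :
    (fun z => parityPoly n D r (hamW z)) ∈ BoolCube.degreeLE n #(signChanges₂ n D) :=
  Submodule.smul_mem _ (D r : ℝ) <| BoolCube.degreeLE_mono (card_filter_le _ _) <|
    BoolCube.prod_sub_hamW_mem_degreeLE _ _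

theorem xor_signRank_upper_bound_general (n : ℕ) (D : ℕ → ℤ)
    (hD : ∀ i ≤ n, D i = 1 ∨ D i = -1) :
    signRank (fun x y : Fin n → Bool => (D (hamW (bxor x y)) : ℝ)) ≤
      4 * ∑ k ∈ Finset.range
          ((((Finset.range (n - 1)).filter (fun i => D i ≠ D (i + 2))).card) + 1),
        n.choose k :=
  (BoolCube.signRank_xor_le_of_parity (parityPoly_comp_hamW_mem_degreeLE n D)
    fun z => parityPoly_mul_pos hD (hamW_le z)).trans (Nat.mul_le_mul_right _ (by norm_num))

/-- Upper bound of the main theorem: with `M = deg₂(D)`, the sign matrix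
`F(x,y) = D(|x ⊕ y|)` has sign-rank at most `4 · ∑_{k=0}^{M} C(n,k)`. -/
theorem xor_signRank_upper_bound (n : ℕ) (hn : 1 ≤ n) (D : ℕ → ℤ)
    (hD : ∀ i ≤ n, D i = 1 ∨ D i = -1) :
    signRank (fun x y : Fin n → Bool => (D (hamW (bxor x y)) : ℝ)) ≤
      4 * ∑ k ∈ Finset.range
          ((((Finset.range (n - 1)).filter (fun i => D i ≠ D (i + 2))).card) + 1),
        n.choose k :=
  xor_signRank_upper_bound_general n D hD
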